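/- arXiv:2502.02132 — 2 statements merged into one kernel-verified Lean document; each statement's English description precedes it below -/
import Mathlib

section
/- Let (a_k) and (b_k) be sequences of real numbers such that the series of |a_k| + |b_k| converges. Then the double sum S_n = sum over k from 1 to n of a_k * (sum over s from n-k to n-1 of b_s) tends to 0 as n tends to infinity. -/
open Filter Finset

theorem decaying_sums (a b : ℕ → ℝ)
    (hab : Summable (fun k => |a k| + |b k|)) :
    Tendsto (fun n => ∑ k ∈ Finset.Icc 1 n, a k * ∑ s ∈ Finset.Icc (n - k) (n - 1), b s)
      atTop (nhds 0) := by
  have hA : Summable fun k => |a k| :=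
    hab.of_nonneg_of_le (fun k => abs_nonneg _) (fun k => le_add_of_nonneg_right (abs_nonneg _))
  have hB : Summable fun k => |b k| :=
    hab.of_nonneg_of_le (fun k => abs_nonneg _) (fun k => le_add_of_nonneg_left (abs_nonneg _))
  have hb : Summable b := hB.of_abs
  set B := ∑' k, |b k| with hBdef
  set g : ℕ → ℕ → ℝ := fun n k =>
    if k ∈ Finset.Icc 1 n then a k * ∑ s ∈ Finset.Icc (n - k) (n - 1), b s else 0 with hg
  have key : Tendsto (fun n => ∑' k, g n k) atTop (nhds 0) := by
    have h0 : (0 : ℝ) = ∑' _ : ℕ, (0 : ℝ) := by simp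
    rw [h0]
    apply tendsto_tsum_of_dominated_convergence (bound := fun k => |a k| * B)
      (hA.mul_right B)
    · intro k
      rcases Nat.eq_zero_or_pos k with hk | hk
      · subst hk
        have : ∀ n, g n 0 = 0 := by
          intro n; simp [hg]
        simp only [this]; exact tendsto_const_nhds
      · set P : ℕ → ℝ := fun m => ∑ s ∈ Finset.range m, b s with hP
        have hPlim : Tendsto P atTop (nhds (∑' s, b s)) := hb.hasSum.tendsto_sum_nat
        have hlim : Tendsto (fun n => a k * (P n - P (n - k))) atTop (nhds 0) := by
          have := (hPlim.sub (hPlim.comp (tendsto_sub_atTop_nat k))).const_mul (a k)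
          simpa using this
        apply hlim.congr'
        filter_upwards [eventually_ge_atTop k] with n hn
        have hn1 : 1 ≤ n := le_trans hk hn
        have hmem : k ∈ Finset.Icc 1 n := Finset.mem_Icc.mpr ⟨hk, hn⟩
        have hIcc : Finset.Icc (n - k) (n - 1) = Finset.Ico (n - k) n := by
          rw [← Finset.Ico_add_one_right_eq_Icc]
          congr 1
          omega
        have hsum : ∑ s ∈ Finset.Icc (n - k) (n - 1), b s = P n - P (n - k) := by
          rw [hIcc, Finset.sum_Ico_eq_sub _ (Nat.sub_le n k)]
        simp only [hg, if_pos hmem, hsum]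
    · filter_upwards with n k
      have hBnn : 0 ≤ B := tsum_nonneg fun k => abs_nonneg _
      by_cases hk : k ∈ Finset.Icc 1 n
      · simp only [hg, if_pos hk, Real.norm_eq_abs, abs_mul]
        refine mul_le_mul_of_nonneg_left ?_ (abs_nonneg _)
        calc |∑ s ∈ Finset.Icc (n - k) (n - 1), b s|
            ≤ ∑ s ∈ Finset.Icc (n - k) (n - 1), |b s| := Finset.abs_sum_le_sum_abs _ _
          _ ≤ B := Summable.sum_le_tsum _ (fun i _ => abs_nonneg _) hB
      · simp only [hg, if_neg hk, norm_zero]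
        exact mul_nonneg (abs_nonneg _) hBnn
  apply key.congr
  intro n
  rw [tsum_eq_sum (s := Finset.Icc 1 n) (fun k hk => if_neg hk)]
  exact Finset.sum_congr rfl fun k hk => if_pos hk
end

section
/- For β ∈ [0,1), the limit as n → ∞ of β · ∑_{k=0}^{n-1} β^k ∑_{l=1}^{k+1} ∑_{b=0}^{n-l} β^b − β/((1-β)²(1+β)) equals 2β²/((1-β)³(1+β)). -/
open Filter Finset Topology

/-! Each innermost sum is a truncated geometric series `(1 - β ^ (n - l + 1)) / (1 - β)`.
Without truncation the double sum would be `∑ (k + 1) β ^ (k + 1) / (1 - β) → β / (1 - β) ^ 3`;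
the truncation errors are at most `n ^ 2` terms, each bounded by `β ^ (n + 1)`, so they vanish
in the limit. Finally `β / (1 - β) ^ 3 - β / ((1 - β) ^ 2 (1 + β)) = 2 β ^ 2 / ((1 - β) ^ 3 (1 + β))`. -/

lemma geom_sum_eq_one_sub_div {K : Type*} [DivisionRing K] {x : K} (hx : x ≠ 1) (n : ℕ) :
    ∑ i ∈ range n, x ^ i = (1 - x ^ n) / (1 - x) := by
  simpa using geom_sum_Ico' hx (Nat.zero_le n)

lemma mul_sum_pow_mul_sum_geom_eq {K : Type*} [Field K] {β : K} (hβ : β ≠ 1) (n : ℕ) :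
    β * ∑ k ∈ range n, β ^ k * ∑ l ∈ Icc 1 (k + 1), ∑ b ∈ range (n - l + 1), β ^ b
      = (∑ k ∈ range n, ((k : K) + 1) * β ^ (k + 1)
          - ∑ k ∈ range n, ∑ l ∈ Icc 1 (k + 1), β ^ (k + 1) * β ^ (n - l + 1)) / (1 - β) := by
  rw [← sum_sub_distrib, sum_div, mul_sum]
  refine sum_congr rfl fun k _ => ?_
  rw [sum_congr rfl fun l _ => geom_sum_eq_one_sub_div hβ (n - l + 1), ← sum_div, ← mul_sum,
    sum_sub_distrib, sum_const, Nat.card_Icc, nsmul_eq_mul]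
  push_cast
  ring

lemma sum_geom_truncation_le {β : ℝ} (hβ0 : 0 ≤ β) (hβ1 : β ≤ 1) (n : ℕ) :
    ∑ k ∈ range n, ∑ l ∈ Icc 1 (k + 1), β ^ (k + 1) * β ^ (n - l + 1) ≤ (n : ℝ) ^ 2 * β ^ n * β :=
  calc _ ≤ ∑ k ∈ range n, ∑ l ∈ Icc 1 (k + 1), β ^ (n + 1) := by
        refine sum_le_sum fun k hk => sum_le_sum fun l hl => ?_
        rw [mem_range] at hk
        rw [mem_Icc] at hl
        rw [← pow_add]
        exact pow_le_pow_of_le_one hβ0 hβ1 (by omega)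
    _ ≤ ∑ k ∈ range n, (n : ℝ) * β ^ (n + 1) := by
        refine sum_le_sum fun k hk => ?_
        rw [sum_const, Nat.card_Icc, nsmul_eq_mul]
        gcongr
        exact_mod_cast mem_range.1 hk
    _ = (n : ℝ) ^ 2 * β ^ n * β := by
        rw [sum_const, card_range, nsmul_eq_mul]
        ring

lemma tendsto_sum_geom_truncation {β : ℝ} (hβ0 : 0 ≤ β) (hβ1 : β < 1) :
    Tendsto (fun n : ℕ => ∑ k ∈ range n, ∑ l ∈ Icc 1 (k + 1), β ^ (k + 1) * β ^ (n - l + 1))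
      atTop (𝓝 0) := by
  have hlim : Tendsto (fun n : ℕ => (n : ℝ) ^ 2 * β ^ n * β) atTop (𝓝 0) := by
    simpa using (tendsto_pow_const_mul_const_pow_of_abs_lt_one 2
      (abs_lt.2 ⟨by linarith, hβ1⟩)).mul_const β
  exact squeeze_zero (fun n => by positivity) (sum_geom_truncation_le hβ0 hβ1.le) hlim

lemma tendsto_sum_succ_mul_geom {β : ℝ} (hβ0 : 0 ≤ β) (hβ1 : β < 1) :
    Tendsto (fun n : ℕ => ∑ k ∈ range n, ((k : ℝ) + 1) * β ^ (k + 1)) atTop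
      (𝓝 (β / (1 - β) ^ 2)) := by
  have h := ((hasSum_coe_mul_geometric_of_norm_lt_one (r := β)
    (by rwa [Real.norm_of_nonneg hβ0])).tendsto_sum_nat).comp (tendsto_add_atTop_nat 1)
  refine h.congr fun n => ?_
  simp [sum_range_succ']

theorem C_neq_limit (β : ℝ) (hβ0 : 0 ≤ β) (hβ1 : β < 1) :
    Tendsto (fun n : ℕ =>
        β * ∑ k ∈ Finset.range n, β ^ k *
            ∑ l ∈ Finset.Icc 1 (k + 1), ∑ b ∈ Finset.range (n - l + 1), β ^ b
          - β / ((1 - β) ^ 2 * (1 + β)))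
      atTop (nhds (2 * β ^ 2 / ((1 - β) ^ 3 * (1 + β)))) := by
  have hsum : Tendsto (fun n : ℕ =>
      β * ∑ k ∈ range n, β ^ k * ∑ l ∈ Icc 1 (k + 1), ∑ b ∈ range (n - l + 1), β ^ b)
      atTop (𝓝 (β / (1 - β) ^ 3)) := by
    simp_rw [mul_sum_pow_mul_sum_geom_eq hβ1.ne]
    convert ((tendsto_sum_succ_mul_geom hβ0 hβ1).sub
      (tendsto_sum_geom_truncation hβ0 hβ1)).div_const (1 - β) using 2
    rw [sub_zero, div_div, ← pow_succ]
  convert hsum.sub_const (β / ((1 - β) ^ 2 * (1 + β))) using 2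
  field_simp
  ring
end
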